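/- Let W be a group and S a subgroup with exactly k ≥ 2 distinct conjugates S₁, …, S_k. Let C = S₁ ∩ ⋯ ∩ S_k and T_i = ⋂_{j ≠ i} S_j for each i. Then for each i, the intersection of T_i with the product T₁⋯T_{i-1}T_{i+1}⋯T_k of the remaining T_j equals C. -/
import Mathlib

/-- The set of all conjugates `wSw⁻¹` of a subgroup `S` of `W`. -/
def subgroupConjugates {W : Type*} [Group W] (S : Subgroup W) : Set (Subgroup W) :=
  Set.range fun w : W => Subgroup.map (MulAut.conj w).toMonoidHom S

private lemma prod_eq_getElem_of_one {M : Type*} [Monoid M] (l : List M) (n : ℕ)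
    (hn : n < l.length) (h : ∀ m (hm : m < l.length), m ≠ n → l[m] = 1) : l.prod = l[n] := by
  rw [← List.prod_take_mul_prod_drop l n, List.drop_eq_getElem_cons hn, List.prod_cons]
  have h1 : (l.take n).prod = 1 := List.prod_eq_one fun x hx => by
    rw [List.mem_iff_getElem] at hx
    obtain ⟨m, hm, rfl⟩ := hx
    simp only [List.getElem_take]
    exact h m (by simp at hm; omega) (by simp at hm; omega)
  have h2 : (l.drop (n + 1)).prod = 1 := List.prod_eq_one fun x hx => by
    rw [List.mem_iff_getElem] at hx
    obtain ⟨m, hm, rfl⟩ := hx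
    simp only [List.getElem_drop]
    exact h _ (by simp at hm; omega) (by omega)
  rw [h1, h2, one_mul, mul_one]

private lemma prod_eraseIdx_eq_of_one {M : Type*} [Monoid M] (l : List M) (n : ℕ)
    (hn : n < l.length) (h : l[n] = 1) : (l.eraseIdx n).prod = l.prod := by
  rw [List.eraseIdx_eq_take_drop_succ, List.prod_append,
    ← List.prod_take_mul_prod_drop l n, List.drop_eq_getElem_cons hn, List.prod_cons, h, one_mul]

/-- Let `S 0, …, S (k-1)` (for `k ≥ 2`) be the distinct conjugates of the subgroup `S 0` of
`W`.  Let `C = ⋂ j, S j` and `T i = ⋂_{j ≠ i} S j`.  Then for every `i`, the intersection of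
`T i` with the product of the remaining `T j` (`j ≠ i`) equals `C`. -/
theorem product_inter_eq_core {W : Type*} [Group W]
    (k : ℕ) (hk : 2 ≤ k)
    (S : Fin k → Subgroup W) (hinj : Function.Injective S)
    (hconj : Set.range S = subgroupConjugates (S ⟨0, by omega⟩))
    (C : Subgroup W) (hC : C = ⨅ i, S i)
    (T : Fin k → Subgroup W) (hT : ∀ i, T i = ⨅ j ∈ ({i}ᶜ : Set (Fin k)), S j) :
    ∀ i : Fin k,
      {w : W | ∃ t : Fin k → W, (∀ j, t j ∈ T j) ∧
          w = ((List.ofFn t).eraseIdx (i : ℕ)).prod} ∩ (T i : Set W) = (C : Set W) := by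
  have hTmem : ∀ i, ∀ x, x ∈ T i ↔ ∀ j, j ≠ i → x ∈ S j := by
    intro i x
    rw [hT i]
    simp [Subgroup.mem_iInf]
  intro i
  ext w
  simp only [Set.mem_inter_iff, Set.mem_setOf_eq, SetLike.mem_coe, hC, Subgroup.mem_iInf]
  constructor
  · rintro ⟨⟨t, ht, rfl⟩, hwi⟩
    intro l
    by_cases hl : l = i
    · subst hl
      refine list_prod_mem fun x hx => ?_
      rw [List.mem_eraseIdx_iff_getElem] at hx
      obtain ⟨n, hlt, hne, rfl⟩ := hx
      have hnk : n < k := by simpa using hlt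
      rw [List.getElem_ofFn]
      exact (hTmem _ _).mp (ht ⟨n, hnk⟩) l (by simpa [Fin.ext_iff, eq_comm] using hne)
    · exact (hTmem _ _).mp hwi l hl
  · intro hw
    have hj₀ : ∃ j₀ : Fin k, j₀ ≠ i := by
      rcases Nat.lt_or_ge 0 i.1 with h | h
      · exact ⟨⟨0, by omega⟩, by simp [Fin.ext_iff]; omega⟩
      · exact ⟨⟨1, by omega⟩, by simp [Fin.ext_iff]; omega⟩
    obtain ⟨j₀, hj₀⟩ := hj₀
    refine ⟨⟨fun j => if j = j₀ then w else 1, ?_, ?_⟩, ?_⟩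
    · intro j
      by_cases h : j = j₀
      · simpa [h] using (hTmem j₀ w).mpr fun l _ => hw l
      · simpa [h] using (T j).one_mem
    · have hlen : (i : ℕ) < (List.ofFn fun j => if j = j₀ then w else 1).length := by
        simpa using i.2
      have hij : ¬((⟨(i : ℕ), i.2⟩ : Fin k) = j₀) := by
        simpa [Fin.ext_iff] using fun h => hj₀ (Fin.ext h.symm)
      rw [prod_eraseIdx_eq_of_one _ _ hlen (by simp [hij])]
      have hlen2 : (j₀ : ℕ) < (List.ofFn fun j => if j = j₀ then w else 1).length := by
        simpa using j₀.2
      rw [prod_eq_getElem_of_one _ _ hlen2 ?_]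
      · simp
      · intro m hm hmne
        have hmk : m < k := by simpa using hm
        simp only [List.getElem_ofFn]
        have : ¬((⟨m, hmk⟩ : Fin k) = j₀) := by simp [Fin.ext_iff]; omega
        simp [this]
    · exact (hTmem i w).mpr fun l _ => hw l
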